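/- Let α, β, γ, δ be Lipschitz integers and let ε be the vector product of βα, γα, and δ, i.e. a Lipschitz integer such that for every x : Quaternion ℤ, (ε * star x).re equals the determinant of the 4×4 integer matrix whose rows are the coordinate vectors ![re, imI, imJ, imK] of β * α, γ * α, δ, x, in this order. Then ε is a left multiple of α: there exists a Lipschitz integer μ with ε = μ * α. -/

import Mathlib

/-!
Right multiplication by `α` has determinant `|α|⁴` and its inverse is right multiplication by
`ᾱ / |α|²`, so the vector product transforms as `[aα, bα, cα] = |α|² [a, b, c] α`. Writing
`δ = (δ ᾱ / |α|²) α` over `ℚ` and using linearity in the last slot gives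
`[βα, γα, δ] = [β, γ, δ ᾱ] α`. Being polynomial, this identity holds over `ℤ` (also for `α = 0`),
and `[β, γ, δ ᾱ]` is a Lipschitz integer.
-/

/-- The coordinate vector of a Lipschitz integer. -/
def coords (q : Quaternion ℤ) : Fin 4 → ℤ := ![q.re, q.imI, q.imJ, q.imK]

theorem Matrix.det_fin_four {R : Type*} [CommRing R] (M : Matrix (Fin 4) (Fin 4) R) :
    M.det =
      M 0 0 * M 1 1 * M 2 2 * M 3 3 - M 0 0 * M 1 1 * M 2 3 * M 3 2 -
        M 0 0 * M 1 2 * M 2 1 * M 3 3 + M 0 0 * M 1 2 * M 2 3 * M 3 1 +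
        M 0 0 * M 1 3 * M 2 1 * M 3 2 - M 0 0 * M 1 3 * M 2 2 * M 3 1 -
        M 0 1 * M 1 0 * M 2 2 * M 3 3 + M 0 1 * M 1 0 * M 2 3 * M 3 2 +
        M 0 1 * M 1 2 * M 2 0 * M 3 3 - M 0 1 * M 1 2 * M 2 3 * M 3 0 -
        M 0 1 * M 1 3 * M 2 0 * M 3 2 + M 0 1 * M 1 3 * M 2 2 * M 3 0 +
        M 0 2 * M 1 0 * M 2 1 * M 3 3 - M 0 2 * M 1 0 * M 2 3 * M 3 1 -
        M 0 2 * M 1 1 * M 2 0 * M 3 3 + M 0 2 * M 1 1 * M 2 3 * M 3 0 +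
        M 0 2 * M 1 3 * M 2 0 * M 3 1 - M 0 2 * M 1 3 * M 2 1 * M 3 0 -
        M 0 3 * M 1 0 * M 2 1 * M 3 2 + M 0 3 * M 1 0 * M 2 2 * M 3 1 +
        M 0 3 * M 1 1 * M 2 0 * M 3 2 - M 0 3 * M 1 1 * M 2 2 * M 3 0 -
        M 0 3 * M 1 2 * M 2 0 * M 3 1 + M 0 3 * M 1 2 * M 2 1 * M 3 0 := by
  simp only [Matrix.det_succ_row_zero, Matrix.submatrix_apply, Fin.succ_zero_eq_one,
    Matrix.submatrix_submatrix, Matrix.det_unique, Fin.default_eq_zero, Function.comp_apply,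
    Fin.succ_one_eq_two, Fin.sum_univ_succ, Fin.val_zero, Fin.zero_succAbove, Finset.univ_unique,
    Fin.val_succ, Fin.val_eq_zero, Fin.succ_succAbove_zero, Finset.sum_singleton,
    Fin.succ_succAbove_one, Fin.reduceSucc,
    show Fin.succAbove (1 : Fin 4) 2 = 3 from rfl, show Fin.succAbove (2 : Fin 4) 2 = 3 from rfl,
    show Fin.succAbove (3 : Fin 4) 2 = 2 from rfl]
  ring

theorem Quaternion.eq_of_re_mul_star_eq {R : Type*} [CommRing R] [LinearOrder R]
    [IsStrictOrderedRing R] {p q : Quaternion R}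
    (h : ∀ x : Quaternion R, (p * star x).re = (q * star x).re) : p = q := by
  have hpq := h (p - q)
  rwa [← sub_eq_zero, ← Quaternion.re_sub, ← sub_mul, ← Quaternion.normSq_def,
    Quaternion.normSq_eq_zero, sub_eq_zero] at hpq

def quatDet (a b c d : Quaternion ℤ) : ℤ :=
  (Matrix.of ![coords a, coords b, coords c, coords d]).det

def vectorProduct (a b c : Quaternion ℤ) : Quaternion ℤ :=
  ⟨quatDet a b c ⟨1, 0, 0, 0⟩, quatDet a b c ⟨0, 1, 0, 0⟩, quatDet a b c ⟨0, 0, 1, 0⟩,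
    quatDet a b c ⟨0, 0, 0, 1⟩⟩

theorem re_vectorProduct_mul_star (a b c x : Quaternion ℤ) :
    (vectorProduct a b c * star x).re = quatDet a b c x := by
  rw [Quaternion.re_mul]
  simp only [vectorProduct, quatDet, coords, Matrix.det_fin_four, Matrix.of_apply, Matrix.cons_val',
    Matrix.cons_val_zero, Matrix.cons_val_one, Matrix.cons_val, Matrix.cons_val_fin_one,
    Quaternion.re_star, Quaternion.imI_star, Quaternion.imJ_star, Quaternion.imK_star]
  ring

theorem quatDet_mul_mul_eq_mul_star_mul_star (α β γ δ x : Quaternion ℤ) :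
    quatDet (β * α) (γ * α) δ x = quatDet β γ (δ * star α) (x * star α) := by
  simp only [quatDet, coords, Matrix.det_fin_four, Matrix.of_apply, Matrix.cons_val',
    Matrix.cons_val_zero, Matrix.cons_val_one, Matrix.cons_val, Matrix.cons_val_fin_one,
    Quaternion.re_mul, Quaternion.imI_mul, Quaternion.imJ_mul, Quaternion.imK_mul,
    Quaternion.re_star, Quaternion.imI_star, Quaternion.imJ_star, Quaternion.imK_star]
  ring

theorem vectorProduct_right_multiples_is_left_multiple (α β γ δ ε : Quaternion ℤ)
    (hε : ∀ x : Quaternion ℤ,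
      (ε * star x).re = (Matrix.of ![coords (β * α), coords (γ * α), coords δ, coords x]).det) :
    ∃ μ : Quaternion ℤ, ε = μ * α := by
  refine ⟨vectorProduct β γ (δ * star α), Quaternion.eq_of_re_mul_star_eq fun x => ?_⟩
  calc (ε * star x).re
      = quatDet β γ (δ * star α) (x * star α) := (hε x).trans
        (quatDet_mul_mul_eq_mul_star_mul_star α β γ δ x)
    _ = (vectorProduct β γ (δ * star α) * star (x * star α)).re :=
        (re_vectorProduct_mul_star _ _ _ _).symm
    _ = (vectorProduct β γ (δ * star α) * α * star x).re := by
        rw [star_mul, star_star, mul_assoc]
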